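/- Let G and H be graphs. If the Kronecker double coverings K_2 × G and K_2 × H are isomorphic as graphs, then the neighborhood complexes N(G) and N(H) are isomorphic as abstract simplicial complexes. -/

import Mathlib

/-- A graph: a vertex type with a symmetric edge relation (loops allowed). -/
structure LGraph where
  V : Type
  E : V → V → Prop
  symm : ∀ ⦃x y⦄, E x y → E y x

/-- LGraph homomorphisms. -/
def LGraph.Hom (G H : LGraph) : Type :=
  {f : G.V → H.V // ∀ ⦃x y⦄, G.E x y → H.E (f x) (f y)}

/-- LGraph isomorphisms: bijective homomorphisms whose inverse is a homomorphism. -/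
structure LGraph.Iso (G H : LGraph) extends G.V ≃ H.V where
  edge_iff : ∀ x y, G.E x y ↔ H.E (toEquiv x) (toEquiv y)

/-- The complete graph `K₂` on two vertices. -/
def K2 : LGraph := ⟨Fin 2, fun x y => x ≠ y, fun _ _ h => h.symm⟩

/-- The tensor (categorical) product of graphs. -/
def LGraph.tensor (G H : LGraph) : LGraph :=
  ⟨G.V × H.V, fun p q => G.E p.1 q.1 ∧ H.E p.2 q.2,
   fun _ _ h => ⟨G.symm h.1, H.symm h.2⟩⟩

/-- No isolated vertices. -/
def LGraph.NoIsolated (G : LGraph) : Prop := ∀ x, ∃ y, G.E x y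

/-- An abstract simplicial complex, given by its vertex type and its simplices
(nonempty finite vertex sets). -/
structure SComplex where
  V : Type
  S : Finset V → Prop

/-- Isomorphism of abstract simplicial complexes: a bijection of vertex sets under
which a finite set is a simplex iff its image is a simplex. -/
def SComplex.Iso (A B : SComplex) : Prop :=
  ∃ e : A.V ≃ B.V, ∀ s : Finset A.V, A.S s ↔ B.S (s.map e.toEmbedding)

/-- The neighborhood complex `N(G)`: vertices are the non-isolated vertices of `G`,
simplices the nonempty finite sets contained in the neighborhood of some vertex. -/
def LGraph.NC (G : LGraph) : SComplex where
  V := {x : G.V // ∃ y, G.E x y}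
  S s := s.Nonempty ∧ ∃ v : G.V, ∀ x ∈ s, G.E v x.val

/-!
The neighbourhood of `(i, v)` in `K₂ × G` is `{i + 1} × N(v)`, so `N(K₂ × G)` is the disjoint
union of two copies of `N(G)`, and an isomorphism `K₂ × G ≅ K₂ × H` gives
`N(G) ⊔ N(G) ≅ N(H) ⊔ N(H)`. An isomorphism of complexes permutes the connected components
(classes of the equivalence relation generated by lying in a common simplex) and preserves their
isomorphism types. So for every isomorphism type the cardinals `κ`, `μ` of the sets of components
of that type in `N(G)` and in `N(H)` satisfy `2κ = 2μ`, hence `κ = μ`. Matching the components of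
`N(G)` with those of `N(H)` type by type and gluing chosen isomorphisms gives `N(G) ≅ N(H)`.
-/

universe u

theorem fin_two_ne_iff (i j : Fin 2) : i ≠ j ↔ j = i + 1 := by
  revert i j
  decide

theorem Finset.exists_eq_map_sectR {ι β : Type*} {u : Finset (ι × β)} {i : ι}
    (hu : ∀ p ∈ u, p.1 = i) : ∃ t : Finset β, u = t.map (Function.Embedding.sectR i β) := by
  classical
  refine ⟨u.image Prod.snd, Finset.ext fun ⟨k, x⟩ => ?_⟩
  simp only [Finset.mem_map, Finset.mem_image, Function.Embedding.sectR_apply, Prod.mk.injEq]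
  constructor
  · intro hp
    exact ⟨x, ⟨_, hp, rfl⟩, (hu _ hp).symm, rfl⟩
  · rintro ⟨_, ⟨⟨j, y⟩, hp, rfl⟩, rfl, rfl⟩
    obtain rfl := hu _ hp
    exact hp

theorem Equiv.exists_fiberwise_of_prod_equiv {ι α β : Type u} {Z : Type*} [Finite ι] [Nonempty ι]
    (f : α → Z) (g : β → Z) (e : ι × α ≃ ι × β) (he : ∀ p, g (e p).2 = f p.2) :
    ∃ e₀ : α ≃ β, ∀ a, g (e₀ a) = f a := by
  have fiber_prod {γ : Type _} (h : γ → Z) (z : Z) :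
      {p : ι × γ // h p.2 = z} ≃ ι × {c // h c = z} :=
    { toFun := fun p => (p.1.1, ⟨p.1.2, p.2⟩)
      invFun := fun p => ⟨(p.1, p.2.1), p.2.2⟩
      left_inv := fun _ => rfl
      right_inv := fun _ => rfl }
  have hcard (z : Z) : Cardinal.mk {a // f a = z} = Cardinal.mk {b // g b = z} := by
    have := Cardinal.mk_congr <| (fiber_prod f z).symm.trans <|
      (e.subtypeEquiv fun p => by rw [he]).trans (fiber_prod g z)
    rwa [← Cardinal.mul_def, ← Cardinal.mul_def, ← Nat.cast_card,
      Cardinal.natCast_mul_inj Nat.card_pos.ne'] at this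
  exact ⟨Equiv.ofFiberEquiv fun z => (Cardinal.eq.1 (hcard z)).some,
    Equiv.ofFiberEquiv_map _⟩

namespace SComplex

variable {X Y Z : SComplex}

theorem Iso.refl (X : SComplex) : X.Iso X := ⟨Equiv.refl _, by simp⟩

theorem S_iff_S_map_symm {e : X.V ≃ Y.V} (he : ∀ s, X.S s ↔ Y.S (s.map e.toEmbedding))
    (t : Finset Y.V) : Y.S t ↔ X.S (t.map e.symm.toEmbedding) := by
  rw [he, Finset.map_map]
  simp

theorem Iso.symm : X.Iso Y → Y.Iso X
  | ⟨e, he⟩ => ⟨e.symm, S_iff_S_map_symm he⟩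

theorem Iso.trans : X.Iso Y → Y.Iso Z → X.Iso Z
  | ⟨e, he⟩, ⟨f, hf⟩ => ⟨e.trans f, fun s => by rw [he, hf, Finset.map_map]; rfl⟩

instance isoSetoid : Setoid SComplex := ⟨Iso, ⟨Iso.refl, Iso.symm, Iso.trans⟩⟩

theorem Iso.S_empty_iff : X.Iso Y → (X.S ∅ ↔ Y.S ∅)
  | ⟨_, he⟩ => he ∅

abbrev restrict (X : SComplex) (p : X.V → Prop) : SComplex where
  V := {v // p v}
  S s := X.S (s.map (Function.Embedding.subtype p))

theorem restrict_S_subtype {p : X.V → Prop} [DecidablePred p] {s : Finset X.V}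
    (hs : ∀ v ∈ s, p v) : (X.restrict p).S (s.subtype p) ↔ X.S s := by
  change X.S _ ↔ _
  rw [Finset.subtype_map_of_mem hs]

theorem restrict_iso_restrict {e : X.V ≃ Y.V} (he : ∀ s, X.S s ↔ Y.S (s.map e.toEmbedding))
    {p : X.V → Prop} {q : Y.V → Prop} (hpq : ∀ v, p v ↔ q (e v)) :
    (X.restrict p).Iso (Y.restrict q) :=
  ⟨e.subtypeEquiv hpq, fun s => by
    change X.S _ ↔ Y.S _
    rw [he, Finset.map_map, Finset.map_map]
    rfl⟩

def SharesSimplex (X : SComplex) (a b : X.V) : Prop := ∃ s, X.S s ∧ a ∈ s ∧ b ∈ s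

abbrev Component (X : SComplex) : Type := Quot X.SharesSimplex

abbrev component (X : SComplex) (c : X.Component) : SComplex :=
  X.restrict fun v => Quot.mk _ v = c

def componentType (X : SComplex) (c : X.Component) : Quotient isoSetoid := ⟦X.component c⟧

theorem sharesSimplex_map {e : X.V ≃ Y.V} (he : ∀ s, X.S s → Y.S (s.map e.toEmbedding))
    {a b : X.V} : X.SharesSimplex a b → Y.SharesSimplex (e a) (e b)
  | ⟨s, hs, ha, hb⟩ => ⟨s.map e.toEmbedding, he s hs, Finset.mem_map_equiv.2 (by simpa),
      Finset.mem_map_equiv.2 (by simpa)⟩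

theorem Iso.exists_componentEquiv : X.Iso Y →
    ∃ E : X.Component ≃ Y.Component, ∀ c, Y.componentType (E c) = X.componentType c
  | ⟨e, he⟩ => by
    let E : X.Component ≃ Y.Component := Quot.congr e fun a b =>
      ⟨sharesSimplex_map fun s => (he s).1, fun h => by
        simpa using sharesSimplex_map (fun t => (S_iff_S_map_symm he t).1) h⟩
    refine ⟨E, Quot.ind fun a => Quotient.sound (restrict_iso_restrict he fun v => ?_).symm⟩
    exact (E.injective.eq_iff (a := Quot.mk _ v) (b := Quot.mk _ a)).symm

theorem iso_of_componentEquiv (E : X.Component ≃ Y.Component)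
    (hE : ∀ c, Y.componentType (E c) = X.componentType c) (hempty : X.S ∅ ↔ Y.S ∅) :
    X.Iso Y := by
  classical
  choose ψ hψ using fun c => Quotient.exact (hE c).symm
  let F : X.V ≃ Y.V := (Equiv.sigmaFiberEquiv _).symm.trans
    ((E.sigmaCongr ψ).trans (Equiv.sigmaFiberEquiv (Quot.mk Y.SharesSimplex)))
  have hF_mk (v : X.V) : Quot.mk _ (F v) = E (Quot.mk _ v) := (ψ _ ⟨v, rfl⟩).2
  have hF_component {s : Finset X.V} {c : X.Component} (hs : ∀ v ∈ s, Quot.mk _ v = c) :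
      X.S s ↔ Y.S (s.map F.toEmbedding) := by
    have hmap : s.map F.toEmbedding =
        ((s.subtype _).map (ψ c).toEmbedding).map (Function.Embedding.subtype _) := by
      conv_lhs => rw [← Finset.subtype_map_of_mem hs]
      rw [Finset.map_map, Finset.map_map]
      refine congrArg (fun f => Finset.map f _) (Function.Embedding.ext fun ⟨v, hv⟩ => ?_)
      subst hv
      rfl
    rw [hmap]
    exact (restrict_S_subtype hs).symm.trans (hψ c _)
  refine ⟨F, fun s => ?_⟩
  obtain rfl | ⟨a, ha⟩ := s.eq_empty_or_nonempty
  · exact hempty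
  constructor
  · intro hs
    exact (hF_component fun v hv => Quot.sound ⟨s, hs, hv, ha⟩).1 hs
  · intro hs
    refine (hF_component (c := Quot.mk _ a) fun v hv => E.injective ?_).2 hs
    rw [← hF_mk, ← hF_mk]
    exact Quot.sound ⟨_, hs, Finset.mem_map_of_mem _ hv, Finset.mem_map_of_mem _ ha⟩

abbrev copies (ι : Type) (X : SComplex) : SComplex where
  V := ι × X.V
  S s := ∃ i t, X.S t ∧ s = t.map (Function.Embedding.sectR i X.V)

variable {ι : Type}

theorem copies_S_map_sectR (i : ι) (t : Finset X.V) :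
    (copies ι X).S (t.map (Function.Embedding.sectR i X.V)) ↔ X.S t := by
  refine ⟨fun ⟨j, t', ht', heq⟩ => ?_, fun ht => ⟨i, t, ht, rfl⟩⟩
  obtain rfl | ⟨a, ha⟩ := t.eq_empty_or_nonempty
  · rw [Finset.map_empty, eq_comm, Finset.map_eq_empty] at heq
    rwa [heq] at ht'
  · have : (i, a) ∈ t'.map (Function.Embedding.sectR j X.V) := heq ▸ Finset.mem_map_of_mem _ ha
    obtain ⟨_, _, hji⟩ := Finset.mem_map.1 this
    obtain rfl : j = i := congrArg Prod.fst hji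
    rwa [Finset.map_injective _ heq]

theorem copies_sharesSimplex_iff {p q : ι × X.V} :
    (copies ι X).SharesSimplex p q ↔ p.1 = q.1 ∧ X.SharesSimplex p.2 q.2 := by
  constructor
  · rintro ⟨_, ⟨i, t, ht, rfl⟩, hp, hq⟩
    simp only [Finset.mem_map, Function.Embedding.sectR_apply] at hp hq
    obtain ⟨a, ha, rfl⟩ := hp
    obtain ⟨b, hb, rfl⟩ := hq
    exact ⟨rfl, t, ht, ha, hb⟩
  · obtain ⟨i, a⟩ := p
    obtain ⟨j, b⟩ := q
    rintro ⟨rfl, t, ht, ha, hb⟩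
    exact ⟨_, ⟨i, t, ht, rfl⟩, Finset.mem_map_of_mem _ ha, Finset.mem_map_of_mem _ hb⟩

def copiesComponentEquiv (ι : Type) (X : SComplex) : ι × X.Component ≃ (copies ι X).Component where
  toFun p := Quot.map (Function.Embedding.sectR p.1 X.V)
    (fun _ _ h => copies_sharesSimplex_iff.2 ⟨rfl, h⟩) p.2
  invFun := Quot.lift (fun p => (p.1, Quot.mk _ p.2)) fun _ _ h =>
    Prod.ext (copies_sharesSimplex_iff.1 h).1 (Quot.sound (copies_sharesSimplex_iff.1 h).2)
  left_inv := fun ⟨_, c⟩ => Quot.inductionOn c fun _ => rfl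
  right_inv := fun c => Quot.inductionOn c fun _ => rfl

theorem copies_restrict_iso_restrict {P : ι × X.V → Prop} {Q : X.V → Prop} (i : ι)
    (hPQ : ∀ p, P p ↔ p.1 = i ∧ Q p.2) : ((copies ι X).restrict P).Iso (X.restrict Q) := by
  let e : {p // P p} ≃ {v // Q v} :=
    { toFun := fun p => ⟨p.1.2, ((hPQ _).1 p.2).2⟩
      invFun := fun v => ⟨(i, v.1), (hPQ _).2 ⟨rfl, v.2⟩⟩
      left_inv := fun p => Subtype.ext (Prod.ext ((hPQ _).1 p.2).1.symm rfl)
      right_inv := fun _ => rfl }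
  refine ⟨e, fun s => ?_⟩
  have hs : ((s.map e.toEmbedding).map (Function.Embedding.subtype Q)).map
      (Function.Embedding.sectR i X.V) = s.map (Function.Embedding.subtype P) := by
    simp only [Finset.map_map]
    congr 1
    ext p : 1
    exact Prod.ext ((hPQ _).1 p.2).1.symm rfl
  change (copies ι X).S _ ↔ X.S _
  rw [← hs, copies_S_map_sectR]

theorem copies_componentType (p : ι × X.Component) :
    (copies ι X).componentType (copiesComponentEquiv ι X p) = X.componentType p.2 := by
  obtain ⟨i, c⟩ := p
  induction c using Quot.ind with | mk a => ?_
  refine Quotient.sound (copies_restrict_iso_restrict i fun q => ?_)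
  rw [← Prod.mk.injEq]
  exact ((copiesComponentEquiv ι X).injective.eq_iff (a := (q.1, Quot.mk _ q.2))
    (b := (i, Quot.mk _ a)))

theorem iso_of_copies_iso [Finite ι] [Nonempty ι]
    (h : (copies ι X).Iso (copies ι Y)) : X.Iso Y := by
  obtain ⟨E, hE⟩ := h.exists_componentEquiv
  obtain ⟨E₀, hE₀⟩ := Equiv.exists_fiberwise_of_prod_equiv X.componentType Y.componentType
    ((copiesComponentEquiv ι X).trans (E.trans (copiesComponentEquiv ι Y).symm)) fun p => by
      rw [← copies_componentType, Equiv.trans_apply, Equiv.trans_apply, Equiv.apply_symm_apply,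
        hE, copies_componentType]
  have hempty : X.S ∅ ↔ Y.S ∅ := by
    obtain ⟨i⟩ := ‹Nonempty ι›
    simpa using (copies_S_map_sectR i ∅).symm.trans (h.S_empty_iff.trans (copies_S_map_sectR i ∅))
  exact iso_of_componentEquiv E₀ hE₀ hempty

end SComplex

namespace LGraph

theorem Iso.NC_iso {G H : LGraph} (φ : G.Iso H) : G.NC.Iso H.NC := by
  let e : G.NC.V ≃ H.NC.V := φ.subtypeEquiv fun x => φ.exists_congr fun y => φ.edge_iff x y
  refine ⟨e, fun s => ?_⟩
  show (s.Nonempty ∧ ∃ v, ∀ x ∈ s, G.E v x.1) ↔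
    ((s.map e.toEmbedding).Nonempty ∧ ∃ w, ∀ y ∈ s.map e.toEmbedding, H.E w y.1)
  rw [Finset.map_nonempty]
  refine and_congr_right fun _ => φ.exists_congr fun v => ?_
  rw [Finset.forall_mem_map]
  exact forall₂_congr fun x _ => φ.edge_iff v x.1

theorem NC_tensor_K2_iso (G : LGraph) : (K2.tensor G).NC.Iso (SComplex.copies (Fin 2) G.NC) := by
  let e : (K2.tensor G).NC.V ≃ Fin 2 × G.NC.V :=
    { toFun := fun p => (p.1.1, ⟨p.1.2, p.2.elim fun q hq => ⟨q.2, hq.2⟩⟩)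
      invFun := fun p => ⟨(p.1, p.2.1),
        p.2.2.elim fun y hy => ⟨(p.1 + 1, y), (fin_two_ne_iff _ _).2 rfl, hy⟩⟩
      left_inv := fun _ => rfl
      right_inv := fun _ => rfl }
  refine ⟨e, fun s => ⟨?_, ?_⟩⟩
  · rintro ⟨hs, ⟨j, v⟩, hv⟩
    change Fin 2 at j
    have hfst : ∀ q ∈ s.map e.toEmbedding, q.1 = j + 1 := by
      simp only [Finset.mem_map]
      rintro _ ⟨p, hp, rfl⟩
      exact (fin_two_ne_iff _ _).1 (hv p hp).1
    obtain ⟨t, hst⟩ := Finset.exists_eq_map_sectR hfst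
    refine ⟨j + 1, t, ⟨Finset.map_nonempty.1 (hst ▸ hs.map), v, fun x hx => ?_⟩, hst⟩
    have : (j + 1, x) ∈ s.map e.toEmbedding := hst ▸ Finset.mem_map_of_mem _ hx
    obtain ⟨p, hp, hpx⟩ := Finset.mem_map.1 this
    obtain ⟨-, rfl⟩ := Prod.ext_iff.1 hpx
    exact (hv p hp).2
  · rintro ⟨i, t, ⟨ht, v, hv⟩, hst⟩
    refine ⟨Finset.map_nonempty.1 (hst ▸ ht.map), (i + 1, v), fun p hp => ?_⟩
    have : e p ∈ t.map (Function.Embedding.sectR i G.NC.V) := hst ▸ Finset.mem_map_of_mem _ hp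
    obtain ⟨x, hx, hxp⟩ := Finset.mem_map.1 this
    obtain ⟨rfl, rfl⟩ := Prod.ext_iff.1 hxp
    exact ⟨((fin_two_ne_iff _ _).2 rfl).symm, hv _ hx⟩

end LGraph

/-- if the Kronecker double coverings `K₂ × G` and `K₂ × H` are
isomorphic as graphs, then `N(G) ≅ N(H)`. -/
theorem NC_iso_of_kronecker_iso (G H : LGraph)
    (h : Nonempty ((K2.tensor G).Iso (K2.tensor H))) : G.NC.Iso H.NC := by
  obtain ⟨φ⟩ := h
  exact SComplex.iso_of_copies_iso (ι := Fin 2) <|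
    (LGraph.NC_tensor_K2_iso G).symm.trans (φ.NC_iso.trans (LGraph.NC_tensor_K2_iso H))
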